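/- arXiv:2510.04504 — 4 statements merged into one kernel-verified Lean document; each statement's English description precedes it below -/
import Mathlib

section
/- Let T > 0 be a real number and let f : ℝ → ℝ be continuous on [0, T] and concave on [0, T], with f(0) = T and f(T) = 0. Then for every i₀ with 0 < i₀ < T and every t₀ with T − i₀ ≤ t₀ ≤ f(i₀), there exist real constants a ∈ [0, i₀] and b such that f(i₀ − a) + b = t₀ and f(T − a) + b = 0. -/
/-!
Put `g a = f (i₀ - a) - f (T - a)`, continuous on `[0, i₀]`. Then `g 0 = f i₀ ≥ t₀`, while
concavity keeps `f` above the chord `x ↦ T - x`, so `g i₀ = T - f (T - i₀) ≤ T - i₀ ≤ t₀`.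
The intermediate value theorem yields `a` with `g a = t₀`, and `b = -f (T - a)` finishes.
-/

open Set

lemma ConcaveOn.sub_le_of_mem_Icc {T : ℝ} {f : ℝ → ℝ} (hconc : ConcaveOn ℝ (Icc 0 T) f)
    (hT : 0 < T) (hf0 : f 0 = T) (hfT : f T = 0) {x : ℝ} (hx : x ∈ Icc 0 T) :
    T - x ≤ f x := by
  have hw : 0 ≤ x / T := div_nonneg hx.1 hT.le
  have hw' : 0 ≤ 1 - x / T := by rw [sub_nonneg, div_le_one hT]; exact hx.2
  have hconv := hconc.2 (right_mem_Icc.2 hT.le) (left_mem_Icc.2 hT.le) hw hw' (add_sub_cancel _ 1)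
  have hpt : (x / T) • T + (1 - x / T) • (0 : ℝ) = x := by
    simp only [smul_eq_mul, mul_zero, add_zero, div_mul_cancel₀ x hT.ne']
  rw [hpt, hf0, hfT, smul_eq_mul, smul_eq_mul, mul_zero, zero_add] at hconv
  calc T - x = (1 - x / T) * T := by field_simp
    _ ≤ f x := hconv

theorem stmt_0_general (T : ℝ) (f : ℝ → ℝ)
    (hcont : ContinuousOn f (Set.Icc 0 T))
    (hconc : ConcaveOn ℝ (Set.Icc 0 T) f)
    (hf0 : f 0 = T) (hfT : f T = 0) :
    ∀ i₀ : ℝ, 0 < i₀ → i₀ < T →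
      ∀ t₀ : ℝ, T - i₀ ≤ t₀ → t₀ ≤ f i₀ →
        ∃ a b : ℝ, a ∈ Set.Icc (0 : ℝ) i₀ ∧
          f (i₀ - a) + b = t₀ ∧ f (T - a) + b = 0 := by
  intro i₀ hi₀ hi₀T t₀ ht₀_ge ht₀_le
  have hchord : T - (T - i₀) ≤ f (T - i₀) :=
    hconc.sub_le_of_mem_Icc (hi₀.trans hi₀T) hf0 hfT ⟨by linarith, by linarith⟩
  have hmaps (c : ℝ) (hc : i₀ ≤ c) (hcT : c ≤ T) : MapsTo (c - ·) (Icc 0 i₀) (Icc 0 T) :=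
    fun a ha ↦ ⟨by linarith [ha.2], by linarith [ha.1]⟩
  have hg : ContinuousOn (fun a ↦ f (i₀ - a) - f (T - a)) (Icc 0 i₀) :=
    (hcont.comp (by fun_prop) (hmaps i₀ le_rfl hi₀T.le)).sub
      (hcont.comp (by fun_prop) (hmaps T hi₀T.le le_rfl))
  have hg_end : f (i₀ - i₀) - f (T - i₀) ≤ t₀ := by rw [sub_self, hf0]; linarith
  have hg_start : t₀ ≤ f (i₀ - 0) - f (T - 0) := by
    rw [sub_zero, sub_zero, hfT, sub_zero]; exact ht₀_le
  obtain ⟨a, ha, hga⟩ := intermediate_value_Icc' hi₀.le hg ⟨hg_end, hg_start⟩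
  exact ⟨a, -f (T - a), ha, by linarith, by ring⟩

/-- Existence of shift constants `a, b` such that the shifted concave scheduler
`i ↦ f (i - a) + b` passes through `(i₀, t₀)` and satisfies `f (T - a) + b = 0`. -/
theorem stmt_0 (T : ℝ) (hT : 0 < T) (f : ℝ → ℝ)
    (hcont : ContinuousOn f (Set.Icc 0 T))
    (hconc : ConcaveOn ℝ (Set.Icc 0 T) f)
    (hf0 : f 0 = T) (hfT : f T = 0) :
    ∀ i₀ : ℝ, 0 < i₀ → i₀ < T →
      ∀ t₀ : ℝ, T - i₀ ≤ t₀ → t₀ ≤ f i₀ →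
        ∃ a b : ℝ, a ∈ Set.Icc (0 : ℝ) i₀ ∧
          f (i₀ - a) + b = t₀ ∧ f (T - a) + b = 0 :=
  stmt_0_general T f hcont hconc hf0 hfT
end

section
/- Let T > 0 be a real number and let f : ℝ → ℝ be continuous on [0, T] and strictly concave on [0, T], with f(0) = T and f(T) = 0. Then for every i₀ with 0 < i₀ < T and every t₀ with T − i₀ ≤ t₀ ≤ f(i₀), the pair of real constants (a, b) with a ∈ [0, i₀] satisfying f(i₀ − a) + b = t₀ and f(T − a) + b = 0 is unique: if (a₁, b₁) and (a₂, b₂) both satisfy these two equations with a₁, a₂ ∈ [0, i₀], then a₁ = a₂ and b₁ = b₂. -/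
/-!
Subtracting the two equations eliminates `b`: every admissible `a` solves
`f (i₀ - a) - f (T - a) = t₀`. The left side is minus the increment of `f` over a window of
fixed length `T - i₀` starting at `i₀ - a`, and increments of a strictly concave function strictly
decrease as the window moves right, so it is strictly monotone in `a` and has at most one root.
-/

open Set

theorem StrictConcaveOn.sub_add_lt_sub_add {𝕜 : Type*} [Field 𝕜] [LinearOrder 𝕜]
    [IsStrictOrderedRing 𝕜] {s : Set 𝕜} {f : 𝕜 → 𝕜} (hf : StrictConcaveOn 𝕜 s f)
    {x y c : 𝕜} (hx : x ∈ s) (hyc : y + c ∈ s) (hxy : x < y) (hc : 0 < c) :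
    f (y + c) - f y < f (x + c) - f x := by
  -- `y` and `x + c` are mirror-image convex combinations of the endpoints `x` and `y + c`.
  have hd : 0 < y - x + c := by linarith
  set l := c / (y - x + c) with hl
  have hl0 : 0 < l := div_pos hc hd
  have hl1 : 0 < 1 - l := sub_pos.2 <| (div_lt_one hd).2 (by linarith)
  have hne : x ≠ y + c := by linarith
  have hy := hf.2 hx hyc hne hl0 hl1 (by ring)
  have hxc := hf.2 hx hyc hne hl1 hl0 (by ring)
  have ey : l • x + (1 - l) • (y + c) = y := by
    simp only [hl, smul_eq_mul]; field_simp; ring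
  have exc : (1 - l) • x + l • (y + c) = x + c := by
    simp only [hl, smul_eq_mul]; field_simp; ring
  rw [ey] at hy
  rw [exc] at hxc
  simp only [smul_eq_mul] at hy hxc
  linarith

theorem StrictConcaveOn.strictAntiOn_sub_sub {T i : ℝ} {f : ℝ → ℝ}
    (hf : StrictConcaveOn ℝ (Icc 0 T) f) (hiT : i < T) :
    StrictAntiOn (fun a => f (i - a) - f (T - a)) (Icc 0 i) := by
  rintro a ⟨ha0, hai⟩ a' ⟨-, ha'i⟩ haa'
  have key := hf.sub_add_lt_sub_add (x := i - a') (y := i - a) (c := T - i)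
    ⟨by linarith, by linarith⟩ ⟨by linarith, by linarith⟩ (by linarith) (by linarith)
  rw [sub_add_sub_cancel', sub_add_sub_cancel'] at key
  dsimp only
  linarith

theorem stmt_1_general (T : ℝ) (f : ℝ → ℝ)
    (hconc : StrictConcaveOn ℝ (Set.Icc 0 T) f) :
    ∀ i₀ : ℝ, 0 < i₀ → i₀ < T →
      ∀ t₀ : ℝ, T - i₀ ≤ t₀ → t₀ ≤ f i₀ →
        ∀ a₁ b₁ a₂ b₂ : ℝ,
          a₁ ∈ Set.Icc (0 : ℝ) i₀ → a₂ ∈ Set.Icc (0 : ℝ) i₀ →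
          f (i₀ - a₁) + b₁ = t₀ → f (T - a₁) + b₁ = 0 →
          f (i₀ - a₂) + b₂ = t₀ → f (T - a₂) + b₂ = 0 →
          a₁ = a₂ ∧ b₁ = b₂ := by
  intro i₀ _ hiT t₀ _ _ a₁ b₁ a₂ b₂ ha₁ ha₂ h₁ h₁T h₂ h₂T
  have ha : a₁ = a₂ := (hconc.strictAntiOn_sub_sub hiT).injOn ha₁ ha₂ (by linarith)
  subst ha
  exact ⟨rfl, by linarith⟩

/-- Uniqueness of the shift constants `(a, b)` for a strictly concave scheduler. -/
theorem stmt_1 (T : ℝ) (hT : 0 < T) (f : ℝ → ℝ)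
    (hcont : ContinuousOn f (Set.Icc 0 T))
    (hconc : StrictConcaveOn ℝ (Set.Icc 0 T) f)
    (hf0 : f 0 = T) (hfT : f T = 0) :
    ∀ i₀ : ℝ, 0 < i₀ → i₀ < T →
      ∀ t₀ : ℝ, T - i₀ ≤ t₀ → t₀ ≤ f i₀ →
        ∀ a₁ b₁ a₂ b₂ : ℝ,
          a₁ ∈ Set.Icc (0 : ℝ) i₀ → a₂ ∈ Set.Icc (0 : ℝ) i₀ →
          f (i₀ - a₁) + b₁ = t₀ → f (T - a₁) + b₁ = 0 →
          f (i₀ - a₂) + b₂ = t₀ → f (T - a₂) + b₂ = 0 →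
          a₁ = a₂ ∧ b₁ = b₂ :=
  stmt_1_general T f hconc
end

section
/- Let T > 0 be a real number, let f : ℝ → ℝ be concave on [0, T] with f(0) = T and f(T) = 0, and let i₀ satisfy 0 < i₀ < T. Define g : [0, i₀] → ℝ by g(a) = f(i₀ − a) − f(T − a). Then for every a ∈ [0, i₀], T − f(T − i₀) ≤ g(a) ≤ f(i₀); moreover g(0) = f(i₀) and g(i₀) = T − f(T − i₀), and T − f(T − i₀) ≤ T − i₀ ≤ f(i₀). -/
/-!
A concave function lies above its chords, and its increments over intervals of a fixed length
decrease as the interval moves right: `f a + f d ≤ f b + f c` whenever `[b, c] ⊆ [a, d]` have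
the same midpoint. Both bounds on `g a = f (i₀ - a) - f (T - a)` are instances of the second fact
(comparing with the pairs `0, T - a` and `i₀ - a, T`), and the chord from `(0, T)` to `(T, 0)`
gives `T - x ≤ f x`, hence the comparison with `T - i₀`.
-/

section ConcaveChord

variable {𝕜 : Type*} [Field 𝕜] [LinearOrder 𝕜] [IsStrictOrderedRing 𝕜] {s : Set 𝕜} {f : 𝕜 → 𝕜}

theorem ConcaveOn.chord_le (hf : ConcaveOn 𝕜 s f) {a b x : 𝕜} (ha : a ∈ s) (hb : b ∈ s)
    (hax : a ≤ x) (hxb : x ≤ b) : (b - x) * f a + (x - a) * f b ≤ (b - a) * f x := by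
  rcases hax.eq_or_lt with rfl | hax
  · simp only [sub_self, zero_mul, add_zero, le_refl]
  have hab : 0 < b - a := by linarith
  have key := hf.2 ha hb (div_nonneg (sub_nonneg.2 hxb) hab.le)
    (div_nonneg (sub_nonneg.2 hax.le) hab.le) (by field)
  have hx : (b - x) / (b - a) * a + (x - a) / (b - a) * b = x := by field
  simp only [smul_eq_mul, hx] at key
  calc (b - x) * f a + (x - a) * f b
      = (b - a) * ((b - x) / (b - a) * f a + (x - a) / (b - a) * f b) := by field
    _ ≤ (b - a) * f x := by gcongr

theorem ConcaveOn.add_le_add_of_add_eq (hf : ConcaveOn 𝕜 s f) {a b c d : 𝕜} (ha : a ∈ s)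
    (hd : d ∈ s) (hab : a ≤ b) (hbd : b ≤ d) (hsum : a + d = b + c) :
    f a + f d ≤ f b + f c := by
  rcases hab.eq_or_lt with rfl | hab
  · obtain rfl : c = d := by linarith
    rfl
  obtain rfl : c = a + d - b := by linarith
  have hb := hf.chord_le ha hd hab.le hbd
  have hc := hf.chord_le ha hd (x := a + d - b) (by linarith) (by linarith)
  refine le_of_mul_le_mul_left ?_ (by linarith : 0 < d - a)
  linear_combination hb + hc

theorem ConcaveOn.sub_le_of_Icc {T : 𝕜} (hT : 0 < T) (hf : ConcaveOn 𝕜 (Set.Icc 0 T) f)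
    (hf0 : f 0 = T) (hfT : f T = 0) {x : 𝕜} (hx : x ∈ Set.Icc 0 T) : T - x ≤ f x := by
  have h := hf.chord_le (Set.left_mem_Icc.2 hT.le) (Set.right_mem_Icc.2 hT.le) hx.1 hx.2
  rw [hf0, hfT] at h
  nlinarith

end ConcaveChord

theorem stmt_5_general (T : ℝ) (f : ℝ → ℝ)
    (hconc : ConcaveOn ℝ (Set.Icc 0 T) f)
    (hf0 : f 0 = T) (hfT : f T = 0)
    (i₀ : ℝ) (hi₀ : 0 < i₀) (hi₀T : i₀ < T) :
    (∀ a ∈ Set.Icc (0 : ℝ) i₀,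
        T - f (T - i₀) ≤ f (i₀ - a) - f (T - a) ∧
        f (i₀ - a) - f (T - a) ≤ f i₀) ∧
    f (i₀ - 0) - f (T - 0) = f i₀ ∧
    f (i₀ - i₀) - f (T - i₀) = T - f (T - i₀) ∧
    T - f (T - i₀) ≤ T - i₀ ∧ T - i₀ ≤ f i₀ := by
  have hT : 0 < T := hi₀.trans hi₀T
  have hmem {x : ℝ} (h0 : 0 ≤ x) (hx : x ≤ T) : x ∈ Set.Icc 0 T := ⟨h0, hx⟩
  refine ⟨fun a ⟨ha0, hai⟩ => ⟨?_, ?_⟩, by simp [hfT], by simp [hf0], ?_, ?_⟩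
  · have := hconc.add_le_add_of_add_eq (a := 0) (b := i₀ - a) (c := T - i₀) (d := T - a)
      (hmem le_rfl hT.le) (hmem (by linarith) (by linarith)) (by linarith) (by linarith) (by ring)
    linarith
  · have := hconc.add_le_add_of_add_eq (a := i₀ - a) (b := i₀) (c := T - a) (d := T)
      (hmem (by linarith) (by linarith)) (hmem hT.le le_rfl) (by linarith) hi₀T.le (by ring)
    linarith
  · linarith [hconc.sub_le_of_Icc hT hf0 hfT (hmem (by linarith) (by linarith) : T - i₀ ∈ _)]
  · linarith [hconc.sub_le_of_Icc hT hf0 hfT (hmem hi₀.le hi₀T.le)]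

/-- Bounds and endpoint values of `g a = f (i₀ - a) - f (T - a)` on `[0, i₀]`. -/
theorem stmt_5 (T : ℝ) (hT : 0 < T) (f : ℝ → ℝ)
    (hconc : ConcaveOn ℝ (Set.Icc 0 T) f)
    (hf0 : f 0 = T) (hfT : f T = 0)
    (i₀ : ℝ) (hi₀ : 0 < i₀) (hi₀T : i₀ < T) :
    (∀ a ∈ Set.Icc (0 : ℝ) i₀,
        T - f (T - i₀) ≤ f (i₀ - a) - f (T - a) ∧
        f (i₀ - a) - f (T - a) ≤ f i₀) ∧
    f (i₀ - 0) - f (T - 0) = f i₀ ∧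
    f (i₀ - i₀) - f (T - i₀) = T - f (T - i₀) ∧
    T - f (T - i₀) ≤ T - i₀ ∧ T - i₀ ≤ f i₀ :=
  stmt_5_general T f hconc hf0 hfT i₀ hi₀ hi₀T
end

section
/- Let T > 0 be a real number, let f : ℝ → ℝ be continuous on [0, T] and concave on [0, T] with f(0) = T and f(T) = 0, and let i₀ satisfy 0 < i₀ < T. Define g : [0, i₀] → ℝ by g(a) = f(i₀ − a) − f(T − a). Then the image of [0, i₀] under g is exactly the closed interval [T − f(T − i₀), f(i₀)]. -/
/-!
The function `g` is antitone: for `a ≤ a'`, `g a - g a'` is the rise of `f` over `[i₀ - a', i₀ - a]`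
minus its rise over the translate `[T - a', T - a]`, which is nonnegative by concavity. A continuous
antitone function maps `[0, i₀]` onto `[g i₀, g 0]`.
-/

open Set

theorem ConcaveOn.map_add_sub_map_le_of_le {s : Set ℝ} {f : ℝ → ℝ} (hf : ConcaveOn ℝ s f)
    {x y c : ℝ} (hx : x ∈ s) (hyc : y + c ∈ s) (hxy : x ≤ y) (hc : 0 ≤ c) :
    f (y + c) - f y ≤ f (x + c) - f x := by
  rcases (add_le_add hxy hc).eq_or_lt with hd | hd
  · obtain rfl : x = y := by linarith
    obtain rfl : c = 0 := by linarith
    rfl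
  have hd : 0 < y + c - x := by linarith
  -- `x + c` and `y` are the convex combinations of `x` and `y + c` with swapped weights
  have ha : 0 ≤ (y - x) / (y + c - x) := div_nonneg (by linarith) hd.le
  have hb : 0 ≤ c / (y + c - x) := div_nonneg hc hd.le
  have hab : (y - x) / (y + c - x) + c / (y + c - x) = 1 := by field_simp; ring
  have h₁ := hf.2 hx hyc ha hb hab
  have h₂ := hf.2 hx hyc hb ha (by rw [add_comm, hab])
  simp only [smul_eq_mul] at h₁ h₂
  rw [show (y - x) / (y + c - x) * x + c / (y + c - x) * (y + c) = x + c by field_simp; ring]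
    at h₁
  rw [show c / (y + c - x) * x + (y - x) / (y + c - x) * (y + c) = y by field_simp; ring] at h₂
  linear_combination h₁ + h₂ - (f x + f (y + c)) * hab

theorem stmt_6_general (T : ℝ) (f : ℝ → ℝ)
    (hcont : ContinuousOn f (Set.Icc 0 T))
    (hconc : ConcaveOn ℝ (Set.Icc 0 T) f)
    (hf0 : f 0 = T) (hfT : f T = 0)
    (i₀ : ℝ) (hi₀ : 0 < i₀) (hi₀T : i₀ < T) :
    (fun a : ℝ => f (i₀ - a) - f (T - a)) '' Set.Icc 0 i₀ =
      Set.Icc (T - f (T - i₀)) (f i₀) := by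
  have hmem : ∀ {t}, i₀ ≤ t → t ≤ T → ∀ a ∈ Icc 0 i₀, t - a ∈ Icc 0 T := fun hi₀t htT a ha =>
    ⟨by linarith [ha.2], by linarith [ha.1]⟩
  have hg_cont : ContinuousOn (fun a : ℝ => f (i₀ - a) - f (T - a)) (Icc 0 i₀) :=
    (hcont.comp (by fun_prop) (hmem le_rfl hi₀T.le)).sub
      (hcont.comp (by fun_prop) (hmem hi₀T.le le_rfl))
  have hg_anti : AntitoneOn (fun a : ℝ => f (i₀ - a) - f (T - a)) (Icc 0 i₀) := by
    intro a ha a' ha' haa'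
    have := hconc.map_add_sub_map_le_of_le (y := T - a') (c := a' - a)
      (hmem le_rfl hi₀T.le a' ha') (by rw [sub_add_sub_cancel]; exact hmem hi₀T.le le_rfl a ha)
      (by linarith) (by linarith)
    simp only [sub_add_sub_cancel] at this
    linarith
  simpa [hf0, hfT] using hg_cont.image_Icc_of_antitoneOn hi₀.le hg_anti

/-- The range of `g a = f (i₀ - a) - f (T - a)` over `[0, i₀]` is exactly
the interval `[T - f (T - i₀), f i₀]`. -/
theorem stmt_6 (T : ℝ) (hT : 0 < T) (f : ℝ → ℝ)
    (hcont : ContinuousOn f (Set.Icc 0 T))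
    (hconc : ConcaveOn ℝ (Set.Icc 0 T) f)
    (hf0 : f 0 = T) (hfT : f T = 0)
    (i₀ : ℝ) (hi₀ : 0 < i₀) (hi₀T : i₀ < T) :
    (fun a : ℝ => f (i₀ - a) - f (T - a)) '' Set.Icc 0 i₀ =
      Set.Icc (T - f (T - i₀)) (f i₀) :=
  stmt_6_general T f hcont hconc hf0 hfT i₀ hi₀ hi₀T
end
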